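/- arXiv:2008.04796 — 7 statements merged into one kernel-verified Lean document; each statement's English description precedes it below -/
import Mathlib

section
/- For every real q ≥ 2 and every dimension d ≥ 1 there exists a constant c > 0, depending only on q, such that for all vectors a, b ∈ ℝ^d one has ⟪‖a‖^{q−2}·a − ‖b‖^{q−2}·b, a − b⟫ ≥ c·‖a − b‖^q. -/
/-!
With `α = ‖a‖ ^ (q - 2)` and `β = ‖b‖ ^ (q - 2)`,
`⟪α • a - β • b, a - b⟫ = (α + β) / 2 * ‖a - b‖ ^ 2 + (α - β) / 2 * (‖a‖ ^ 2 - ‖b‖ ^ 2)`,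
and the last term is nonnegative since `α - β` and `‖a‖ ^ 2 - ‖b‖ ^ 2` have the same sign.
From `‖a - b‖ ≤ ‖a‖ + ‖b‖ ≤ 2 max ‖a‖ ‖b‖` we get `α + β ≥ 2 ^ (2 - q) * ‖a - b‖ ^ (q - 2)`,
whence the constant `c = 2 ^ (1 - q)`.
-/

open Real

lemma rpow_sub_rpow_mul_sq_sub_sq_nonneg {s t p : ℝ} (hs : 0 ≤ s) (ht : 0 ≤ t) (hp : 0 ≤ p) :
    0 ≤ (s ^ p - t ^ p) * (s ^ 2 - t ^ 2) := by
  rcases le_total s t with hst | hts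
  · exact mul_nonneg_of_nonpos_of_nonpos (sub_nonpos.2 (rpow_le_rpow hs hst hp))
      (sub_nonpos.2 (pow_le_pow_left₀ hs hst 2))
  · exact mul_nonneg (sub_nonneg.2 (rpow_le_rpow ht hts hp))
      (sub_nonneg.2 (pow_le_pow_left₀ ht hts 2))

lemma add_rpow_le_two_rpow_mul_add_rpow {s t p : ℝ} (hs : 0 ≤ s) (ht : 0 ≤ t) (hp : 0 ≤ p) :
    (s + t) ^ p ≤ 2 ^ p * (s ^ p + t ^ p) := by
  wlog hst : s ≤ t generalizing s t
  · simpa only [add_comm] using this ht hs (le_of_not_ge hst)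
  calc (s + t) ^ p ≤ (2 * t) ^ p := by gcongr; linarith
    _ = 2 ^ p * t ^ p := mul_rpow zero_le_two ht
    _ ≤ 2 ^ p * (s ^ p + t ^ p) := by gcongr; exact le_add_of_nonneg_left (rpow_nonneg hs p)

lemma norm_sub_rpow_le {E : Type*} [SeminormedAddCommGroup E] (p : ℝ) (hp : 0 ≤ p) (a b : E) :
    ‖a - b‖ ^ p ≤ 2 ^ p * (‖a‖ ^ p + ‖b‖ ^ p) :=
  (rpow_le_rpow (norm_nonneg _) (norm_sub_le a b) hp).trans
    (add_rpow_le_two_rpow_mul_add_rpow (norm_nonneg a) (norm_nonneg b) hp)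

section InnerProductSpace

variable {E : Type*} [NormedAddCommGroup E] [InnerProductSpace ℝ E]

lemma inner_smul_sub_smul_sub_eq (α β : ℝ) (a b : E) :
    inner ℝ (α • a - β • b) (a - b) =
      (α + β) / 2 * ‖a - b‖ ^ 2 + (α - β) / 2 * (‖a‖ ^ 2 - ‖b‖ ^ 2) := by
  rw [norm_sub_sq_real]
  simp only [inner_sub_left, inner_sub_right, real_inner_smul_left,
    real_inner_self_eq_norm_sq, real_inner_comm b a]
  ring

lemma mul_norm_sub_sq_le_inner_rpow_smul_sub (p : ℝ) (hp : 0 ≤ p) (a b : E) :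
    (‖a‖ ^ p + ‖b‖ ^ p) / 2 * ‖a - b‖ ^ 2 ≤
      inner ℝ (‖a‖ ^ p • a - ‖b‖ ^ p • b) (a - b) := by
  rw [inner_smul_sub_smul_sub_eq, le_add_iff_nonneg_right, div_mul_eq_mul_div]
  exact div_nonneg
    (rpow_sub_rpow_mul_sq_sub_sq_nonneg (norm_nonneg a) (norm_nonneg b) hp) zero_le_two

lemma two_rpow_mul_norm_sub_rpow_le_inner_rpow_smul_sub (p : ℝ) (hp : 0 ≤ p) (a b : E) :
    2 ^ (-p - 1) * ‖a - b‖ ^ (p + 2) ≤ inner ℝ (‖a‖ ^ p • a - ‖b‖ ^ p • b) (a - b) := by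
  have h : 2 ^ (-p) * ‖a - b‖ ^ p ≤ ‖a‖ ^ p + ‖b‖ ^ p := by
    rw [rpow_neg zero_le_two, inv_mul_le_iff₀ (rpow_pos_of_pos two_pos p)]
    exact norm_sub_rpow_le p hp a b
  calc 2 ^ (-p - 1) * ‖a - b‖ ^ (p + 2) = 2 ^ (-p) * ‖a - b‖ ^ p / 2 * ‖a - b‖ ^ 2 := by
        rw [rpow_sub two_pos, rpow_one, rpow_add' (norm_nonneg _) (by linarith), rpow_two]
        ring
    _ ≤ (‖a‖ ^ p + ‖b‖ ^ p) / 2 * ‖a - b‖ ^ 2 := by gcongr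
    _ ≤ inner ℝ (‖a‖ ^ p • a - ‖b‖ ^ p • b) (a - b) :=
        mul_norm_sub_sq_le_inner_rpow_smul_sub p hp a b

end InnerProductSpace

/-- **Strong monotonicity of the `q`-power vector field** (paper, Section 2.4).
For every real `q ≥ 2` there is `c > 0` depending only on `q` such that for every
dimension `d ≥ 1` and all `a, b ∈ ℝ^d` one has
`⟪‖a‖^{q-2} a − ‖b‖^{q-2} b, a − b⟫ ≥ c ‖a − b‖^q`. -/
theorem q_power_monotonicity (q : ℝ) (hq : 2 ≤ q) :
    ∃ c : ℝ, 0 < c ∧ ∀ d : ℕ, 1 ≤ d →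
      ∀ a b : EuclideanSpace ℝ (Fin d),
        (inner ℝ (‖a‖ ^ (q - 2) • a - ‖b‖ ^ (q - 2) • b) (a - b) : ℝ) ≥ c * ‖a - b‖ ^ q := by
  refine ⟨2 ^ (1 - q), rpow_pos_of_pos two_pos _, fun d _ a b => ?_⟩
  have h := two_rpow_mul_norm_sub_rpow_le_inner_rpow_smul_sub (q - 2) (by linarith) a b
  rwa [show -(q - 2) - 1 = 1 - q by ring, sub_add_cancel] at h
end

section
/- Let n ≥ 1, let Q ⊆ ℝⁿ be a bounded measurable set and Γ ⊆ closure(Q) a subset satisfying, for some c₀ > 0, the measure density condition vol(B_r(x) ∩ Q) ≥ c₀·rⁿ for every x ∈ Γ and every r ∈ (0,1], and let L, ε₀ > 0. Then there exists γ₀ > 0, depending only on n, c₀, L and ε₀, with the following property: for every δ₀ > 0 and all L-Lipschitz maps η₀, η : closure(Q) → ℝⁿ such that |η₀(x₀) − η₀(x₁)| > ε₀ whenever x₀, x₁ ∈ Γ satisfy |x₀ − x₁| ≥ δ₀, and such that (∫_Q |η(x) − η₀(x)|² dx)^{1/2} < γ₀, one has |η(x₀) − η(x₁)| > ε₀/2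 whenever x₀, x₁ ∈ Γ satisfy |x₀ − x₁| ≥ δ₀. -/
open MeasureTheory Set Metric
open scoped NNReal ENNReal

/-! If `η` moved the two `δ₀`-separated points `x₀, x₁ ∈ Γ` to within `ε₀/2` of each other while
`η₀` keeps them more than `ε₀` apart, then, by the Lipschitz bounds, `|η - η₀|` would be at least
`ε₀/8` on all of `B_r(x₀) ∩ Q` or on all of `B_r(x₁) ∩ Q` for `r = min 1 (ε₀/(16L))`. The density
condition gives that set measure at least `c₀ rⁿ`, so the `L²` distance of `η` and `η₀` would be at
least `γ₀ = (ε₀/8) √(c₀ rⁿ)`. -/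

theorem LipschitzOnWith.dist_le_dist_add_mul_add_dist_add_dist {α β : Type*}
    [PseudoMetricSpace α] [PseudoMetricSpace β] {f g : α → β} {Kf Kg : ℝ≥0} {s : Set α}
    (hf : LipschitzOnWith Kf f s) (hg : LipschitzOnWith Kg g s) {x₀ x₁ y z : α}
    (hx₀ : x₀ ∈ s) (hx₁ : x₁ ∈ s) (hy : y ∈ s) (hz : z ∈ s) :
    dist (g x₀) (g x₁) ≤ dist (f x₀) (f x₁) + (Kf + Kg) * (dist y x₀ + dist z x₁)
      + dist (f y) (g y) + dist (f z) (g z) := by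
  have hgy := hg.dist_le_mul y hy x₀ hx₀
  have hfy := hf.dist_le_mul y hy x₀ hx₀
  have hfz := hf.dist_le_mul z hz x₁ hx₁
  have hgz := hg.dist_le_mul z hz x₁ hx₁
  have hchain : dist (g x₀) (g x₁) ≤ dist (g y) (g x₀) + dist (f y) (g y) + dist (f y) (f x₀)
      + dist (f x₀) (f x₁) + dist (f z) (f x₁) + dist (f z) (g z) + dist (g z) (g x₁) := by
    linarith [dist_triangle4 (g x₀) (g y) (f y) (f x₀), dist_triangle4 (f x₀) (f x₁) (f z) (g z),
      dist_triangle4 (g x₀) (f x₀) (g z) (g x₁), dist_comm (g y) (g x₀), dist_comm (f y) (g y),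
      dist_comm (f z) (f x₁)]
  linarith

theorem forall_le_or_forall_le_of_forall_le_add {α : Type*} {s t : Set α} {u : α → ℝ} {c : ℝ}
    (h : ∀ y ∈ s, ∀ z ∈ t, 2 * c ≤ u y + u z) : (∀ y ∈ s, c ≤ u y) ∨ ∀ z ∈ t, c ≤ u z := by
  by_contra! hlt
  obtain ⟨⟨y, hy, hyc⟩, ⟨z, hz, hzc⟩⟩ := hlt
  linarith [h y hy z hz]

theorem mul_sqrt_measureReal_le_rpow_setIntegral_norm_sq {α E : Type*} [MeasurableSpace α]
    [NormedAddCommGroup E] {μ : Measure α} {f : α → E} {S Q : Set α} {c : ℝ} (hc : 0 ≤ c)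
    (hS : MeasurableSet S) (hSQ : S ⊆ Q) (hf : IntegrableOn (fun x => ‖f x‖ ^ 2) Q μ)
    (hlow : ∀ x ∈ S, c ≤ ‖f x‖) :
    c * √(μ.real S) ≤ (∫ x in Q, ‖f x‖ ^ 2 ∂μ) ^ (1 / 2 : ℝ) := by
  rw [← Real.sqrt_eq_rpow]
  by_cases hSfin : μ S = ∞
  · simp [measureReal_def, hSfin]
  have hsq : c ^ 2 * μ.real S ≤ ∫ x in Q, ‖f x‖ ^ 2 ∂μ :=
    calc c ^ 2 * μ.real S ≤ ∫ x in S, ‖f x‖ ^ 2 ∂μ :=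
          setIntegral_ge_of_const_le_real hS hSfin
            (fun x hx => pow_le_pow_left₀ hc (hlow x hx) 2) (hf.mono_set hSQ)
      _ ≤ ∫ x in Q, ‖f x‖ ^ 2 ∂μ :=
          setIntegral_mono_set hf (.of_forall fun _ => by positivity) hSQ.eventuallyLE
  calc c * √(μ.real S) = √(c ^ 2 * μ.real S) := by
        rw [Real.sqrt_mul (sq_nonneg c), Real.sqrt_sq hc]
    _ ≤ √(∫ x in Q, ‖f x‖ ^ 2 ∂μ) := Real.sqrt_le_sqrt hsq

theorem boundary_separation_preserved_general (n : ℕ) (c₀ L ε₀ : ℝ)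
    (hc₀ : 0 < c₀) (hL : 0 < L) (hε₀ : 0 < ε₀) :
    ∃ γ₀ : ℝ, 0 < γ₀ ∧
      ∀ Q Γ : Set (EuclideanSpace ℝ (Fin n)),
        Bornology.IsBounded Q → MeasurableSet Q → Γ ⊆ closure Q →
        (∀ x ∈ Γ, ∀ r ∈ Set.Ioc (0 : ℝ) 1,
          c₀ * r ^ n ≤ (volume (Metric.ball x r ∩ Q)).toReal) →
      ∀ δ₀ : ℝ, 0 < δ₀ →
      ∀ η₀ η : EuclideanSpace ℝ (Fin n) → EuclideanSpace ℝ (Fin n),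
        LipschitzOnWith (Real.toNNReal L) η₀ (closure Q) →
        LipschitzOnWith (Real.toNNReal L) η (closure Q) →
        (∀ x₀ ∈ Γ, ∀ x₁ ∈ Γ, δ₀ ≤ dist x₀ x₁ → ε₀ < dist (η₀ x₀) (η₀ x₁)) →
        (∫ x in Q, ‖η x - η₀ x‖ ^ 2) ^ (1 / 2 : ℝ) < γ₀ →
        ∀ x₀ ∈ Γ, ∀ x₁ ∈ Γ, δ₀ ≤ dist x₀ x₁ → ε₀ / 2 < dist (η x₀) (η x₁) := by
  obtain ⟨r, hr, hr1, hLr⟩ : ∃ r : ℝ, 0 < r ∧ r ≤ 1 ∧ L * r ≤ ε₀ / 16 :=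
    ⟨min 1 (ε₀ / (16 * L)), by positivity, min_le_left _ _, by
      calc L * min 1 (ε₀ / (16 * L)) ≤ L * (ε₀ / (16 * L)) := by gcongr; exact min_le_right _ _
        _ = ε₀ / 16 := by field_simp⟩
  refine ⟨ε₀ / 8 * √(c₀ * r ^ n), by positivity, ?_⟩
  intro Q Γ hQb hQm hΓ hdens δ₀ _ η₀ η hη₀ hη hsep hclose x₀ hx₀ x₁ hx₁ hdist
  by_contra! hcon
  have hint : IntegrableOn (fun x => ‖η x - η₀ x‖ ^ 2) Q :=
    (((hη.continuousOn.sub hη₀.continuousOn).norm.pow 2).integrableOn_compact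
      hQb.isCompact_closure).mono_set subset_closure
  have hdisp : ∀ y ∈ ball x₀ r ∩ Q, ∀ z ∈ ball x₁ r ∩ Q,
      2 * (ε₀ / 8) ≤ ‖η y - η₀ y‖ + ‖η z - η₀ z‖ := by
    rintro y ⟨hyx, hyQ⟩ z ⟨hzx, hzQ⟩
    have h := hη.dist_le_dist_add_mul_add_dist_add_dist hη₀ (hΓ hx₀) (hΓ hx₁)
      (subset_closure hyQ) (subset_closure hzQ)
    rw [mem_ball] at hyx hzx
    rw [← dist_eq_norm, ← dist_eq_norm]
    push_cast [Real.coe_toNNReal L hL.le] at h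
    nlinarith [hsep x₀ hx₀ x₁ hx₁ hdist]
  obtain ⟨x, hx, hlow⟩ : ∃ x ∈ Γ, ∀ w ∈ ball x r ∩ Q, ε₀ / 8 ≤ ‖η w - η₀ w‖ := by
    rcases forall_le_or_forall_le_of_forall_le_add hdisp with h | h
    exacts [⟨x₀, hx₀, h⟩, ⟨x₁, hx₁, h⟩]
  have hL2 : ε₀ / 8 * √(c₀ * r ^ n) ≤ (∫ x in Q, ‖η x - η₀ x‖ ^ 2) ^ (1 / 2 : ℝ) :=
    calc ε₀ / 8 * √(c₀ * r ^ n) ≤ ε₀ / 8 * √(volume.real (ball x r ∩ Q)) := by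
          gcongr; exact hdens x hx r ⟨hr, hr1⟩
      _ ≤ _ := mul_sqrt_measureReal_le_rpow_setIntegral_norm_sq (by positivity)
          (measurableSet_ball.inter hQm) inter_subset_right hint hlow
  linarith

/-- **Quantitative short-time preservation of boundary separation** (paper, Section 2.1).
For `n, c₀, L, ε₀` there is `γ₀ > 0` such that whenever `η₀` keeps `δ₀`-separated points of
`Γ` at distance `> ε₀` and `η` is `L²`-close to `η₀` (both `L`-Lipschitz on `closure Q`),
then `η` keeps such points at distance `> ε₀/2`. -/
theorem boundary_separation_preserved (n : ℕ) (hn : 1 ≤ n) (c₀ L ε₀ : ℝ)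
    (hc₀ : 0 < c₀) (hL : 0 < L) (hε₀ : 0 < ε₀) :
    ∃ γ₀ : ℝ, 0 < γ₀ ∧
      ∀ Q Γ : Set (EuclideanSpace ℝ (Fin n)),
        Bornology.IsBounded Q → MeasurableSet Q → Γ ⊆ closure Q →
        (∀ x ∈ Γ, ∀ r ∈ Set.Ioc (0 : ℝ) 1,
          c₀ * r ^ n ≤ (volume (Metric.ball x r ∩ Q)).toReal) →
      ∀ δ₀ : ℝ, 0 < δ₀ →
      ∀ η₀ η : EuclideanSpace ℝ (Fin n) → EuclideanSpace ℝ (Fin n),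
        LipschitzOnWith (Real.toNNReal L) η₀ (closure Q) →
        LipschitzOnWith (Real.toNNReal L) η (closure Q) →
        (∀ x₀ ∈ Γ, ∀ x₁ ∈ Γ, δ₀ ≤ dist x₀ x₁ → ε₀ < dist (η₀ x₀) (η₀ x₁)) →
        (∫ x in Q, ‖η x - η₀ x‖ ^ 2) ^ (1 / 2 : ℝ) < γ₀ →
        ∀ x₀ ∈ Γ, ∀ x₁ ∈ Γ, δ₀ ≤ dist x₀ x₁ → ε₀ / 2 < dist (η x₀) (η x₁) :=
  boundary_separation_preserved_general n c₀ L ε₀ hc₀ hL hε₀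
end

section
/- Let X be a real normed vector space, τ > 0, K ≥ 0, N ∈ ℕ, and let x_0, …, x_N ∈ X and real numbers E_0, …, E_N satisfy ‖x_{k+1} − x_k‖² ≤ 2τ·(E_k − E_{k+1} + τ·K) for every 0 ≤ k < N. Then for all 0 ≤ M ≤ N one has ‖x_N − x_M‖ ≤ √(τ·(N−M)) · √(2·(E_M − E_N + (N−M)·τ·K)). -/
open Finset

/-- Chaining increments with the triangle inequality and then Cauchy–Schwarz gives the
discrete analogue of `‖x(t) - x(s)‖² ≤ (t - s) ∫ₛᵗ ‖ẋ‖²`. -/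
theorem norm_sub_sq_le_mul_sum_sq_norm_sub {E : Type*} [SeminormedAddCommGroup E]
    (x : ℕ → E) {M N : ℕ} (hMN : M ≤ N) :
    ‖x N - x M‖ ^ 2 ≤ ((N : ℝ) - M) * ∑ k ∈ Ico M N, ‖x (k + 1) - x k‖ ^ 2 := by
  have hchain : ‖x N - x M‖ ≤ ∑ k ∈ Ico M N, ‖x (k + 1) - x k‖ := by
    simpa only [dist_eq_norm_sub'] using dist_le_Ico_sum_dist x hMN
  calc ‖x N - x M‖ ^ 2 ≤ (∑ k ∈ Ico M N, ‖x (k + 1) - x k‖) ^ 2 := by gcongr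
    _ ≤ #(Ico M N) * ∑ k ∈ Ico M N, ‖x (k + 1) - x k‖ ^ 2 := sq_sum_le_card_mul_sum_sq
    _ = ((N : ℝ) - M) * ∑ k ∈ Ico M N, ‖x (k + 1) - x k‖ ^ 2 := by
      rw [Nat.card_Ico, Nat.cast_sub hMN]

theorem sum_Ico_energy_dissipation (τ K : ℝ) (E : ℕ → ℝ) {M N : ℕ} (hMN : M ≤ N) :
    ∑ k ∈ Ico M N, 2 * τ * (E k - E (k + 1) + τ * K) =
      2 * τ * (E M - E N + ((N : ℝ) - M) * τ * K) := by
  have htelescope : ∑ k ∈ Ico M N, (E k - E (k + 1)) = E M - E N := by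
    rw [← neg_sub, ← sum_Ico_sub E hMN, ← sum_neg_distrib]
    simp only [neg_sub]
  rw [← mul_sum, sum_add_distrib, htelescope, sum_const, Nat.card_Ico, nsmul_eq_mul,
    Nat.cast_sub hMN]
  ring

theorem telescoping_hoelder_estimate_general {X : Type*} [NormedAddCommGroup X]
    (τ K : ℝ) (hτ : 0 < τ) (N : ℕ) (x : ℕ → X) (E : ℕ → ℝ)
    (h : ∀ k < N, ‖x (k + 1) - x k‖ ^ 2 ≤ 2 * τ * (E k - E (k + 1) + τ * K)) :
    ∀ M ≤ N, ‖x N - x M‖ ≤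
      Real.sqrt (τ * ((N : ℝ) - (M : ℝ))) *
        Real.sqrt (2 * (E M - E N + ((N : ℝ) - (M : ℝ)) * τ * K)) := by
  intro M hMN
  have hlen : (0 : ℝ) ≤ (N : ℝ) - M := sub_nonneg.mpr (Nat.cast_le.mpr hMN)
  have hsq : ‖x N - x M‖ ^ 2 ≤
      (τ * ((N : ℝ) - M)) * (2 * (E M - E N + ((N : ℝ) - M) * τ * K)) :=
    calc ‖x N - x M‖ ^ 2 ≤ ((N : ℝ) - M) * ∑ k ∈ Ico M N, ‖x (k + 1) - x k‖ ^ 2 :=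
          norm_sub_sq_le_mul_sum_sq_norm_sub x hMN
      _ ≤ ((N : ℝ) - M) * ∑ k ∈ Ico M N, 2 * τ * (E k - E (k + 1) + τ * K) := by
          gcongr with k hk
          exact h k (mem_Ico.mp hk).2
      _ = (τ * ((N : ℝ) - M)) * (2 * (E M - E N + ((N : ℝ) - M) * τ * K)) := by
          rw [sum_Ico_energy_dissipation τ K E hMN]
          ring
  rw [← Real.sqrt_mul (by positivity), ← Real.sqrt_sq (norm_nonneg (x N - x M))]
  exact Real.sqrt_le_sqrt hsq

/-- **Abstract telescoping/Cauchy–Schwarz estimate** behind the uniform `1/2`-Hölder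
continuity in time of the minimizing-movements interpolants (paper, Section 2.2). -/
theorem telescoping_hoelder_estimate {X : Type*} [NormedAddCommGroup X] [NormedSpace ℝ X]
    (τ K : ℝ) (hτ : 0 < τ) (hK : 0 ≤ K) (N : ℕ) (x : ℕ → X) (E : ℕ → ℝ)
    (h : ∀ k < N, ‖x (k + 1) - x k‖ ^ 2 ≤ 2 * τ * (E k - E (k + 1) + τ * K)) :
    ∀ M ≤ N, ‖x N - x M‖ ≤
      Real.sqrt (τ * ((N : ℝ) - (M : ℝ))) *
        Real.sqrt (2 * (E M - E N + ((N : ℝ) - (M : ℝ)) * τ * K)) :=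
  telescoping_hoelder_estimate_general τ K hτ N x E h
end

section
/- For every n ≥ 1 and every K ≥ 0 there exists τ₀ > 0, depending only on n and K, with the following property: for every τ ∈ (0, τ₀], every N ∈ ℕ and all real n×n matrices A_1, …, A_N with trace(A_k) = 0 for each k and Σ_{k=1}^{N} τ·‖A_k‖² ≤ K, one has 1/2 ≤ Π_{k=1}^{N} det(1 + τ·A_k) ≤ 2. -/
/-!
The coefficients of `det (1 + X • B)` are the sums of principal minors of `B`, so
`det (1 + B) = 1 + tr B + ∑_{|S| ≥ 2} det B_S`, and a minor of size `k ≥ 2` has modulus at most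
`k! ‖B‖^k ≤ n! ‖B‖²` once `‖B‖ ≤ 1`. For traceless `A_k` this gives
`det (1 + τ A_k) = 1 + δ_k` with `|δ_k| ≤ C_n τ² ‖A_k‖²`, hence `∑ |δ_k| ≤ C_n τ K` is small.
The Weierstrass product inequality `∏ (1 - x_k) ≥ 1 - ∑ x_k`, together with
`(1 + x)(1 - x) ≤ 1`, then traps `∏ (1 + δ_k)` between `1 - ∑ |δ_k|` and its inverse.
-/

/-- The Frobenius norm of a real `n×n` matrix. -/
noncomputable def frobNorm {n : ℕ} (A : Matrix (Fin n) (Fin n) ℝ) : ℝ :=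
  Real.sqrt (∑ i, ∑ j, A i j ^ 2)

open Finset
open scoped Nat

namespace Matrix

open Polynomial

variable {ι : Type*} [Fintype ι] [DecidableEq ι]

theorem det_one_add_sub_one_sub_trace {R : Type*} [CommRing R] (B : Matrix ι ι R) :
    det (1 + B) - 1 - trace B = ∑ k ∈ range (Fintype.card ι), ∑ s ∈ univ.powersetCard (k + 2),
      (B.submatrix (Subtype.val : s → ι) (Subtype.val : s → ι)).det := by
  set P : R[X] := det (1 + (X : R[X]) • B.map C)
  have hP : det (1 + B) = P.eval 1 := by
    rw [← coe_evalRingHom, RingHom.map_det]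
    congr 1
    ext i j
    by_cases h : i = j <;> simp [h]
  have hdeg : P.natDegree < Fintype.card ι + 2 := by
    have := natDegree_det_X_add_C_le B 1
    rw [add_comm, Matrix.map_one _ C.map_zero C.map_one] at this
    exact this.trans_lt (by omega)
  have h0 : P.coeff 0 = 1 := by
    rw [coeff_zero_eq_eval_zero]
    simpa using eval_det_add_X_smul (1 : Matrix ι ι R[X]) B
  rw [hP, eval_eq_sum_range' hdeg, sum_range_succ', sum_range_succ']
  simp only [one_pow, mul_one, zero_add, h0, coeff_det_one_add_X_smul_one, P]
  simp only [coeff_det_one_add_X_smul_eq_sum_minors]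
  ring

theorem abs_det_one_add_sub_one_sub_trace_le {B : Matrix ι ι ℝ} {ε : ℝ} (hε₀ : 0 ≤ ε)
    (hε₁ : ε ≤ 1) (hB : ∀ i j, |B i j| ≤ ε) :
    |det (1 + B) - 1 - trace B| ≤
      Fintype.card ι * 2 ^ Fintype.card ι * (Fintype.card ι)! * ε ^ 2 := by
  have hminor : ∀ k, ∀ s ∈ univ.powersetCard (k + 2),
      |(B.submatrix (Subtype.val : s → ι) (Subtype.val : s → ι)).det| ≤
        (Fintype.card ι)! * ε ^ 2 := by
    intro k s hs
    have hcard : #s = k + 2 := (mem_powersetCard.mp hs).2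
    calc _ ≤ (Fintype.card s)! • ε ^ Fintype.card s :=
          det_le (abv := AbsoluteValue.abs) fun i j => hB _ _
      _ ≤ (Fintype.card ι)! * ε ^ 2 := by
          rw [nsmul_eq_mul, Fintype.card_coe, hcard]
          exact mul_le_mul (mod_cast Nat.factorial_le (hcard ▸ card_le_univ s))
            (pow_le_pow_of_le_one hε₀ hε₁ (by omega)) (by positivity) (by positivity)
  rw [det_one_add_sub_one_sub_trace]
  calc _ ≤ ∑ k ∈ range (Fintype.card ι), ∑ s ∈ univ.powersetCard (k + 2),
        |(B.submatrix (Subtype.val : s → ι) (Subtype.val : s → ι)).det| :=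
        (abs_sum_le_sum_abs _ _).trans (sum_le_sum fun k _ => abs_sum_le_sum_abs _ _)
    _ ≤ ∑ k ∈ range (Fintype.card ι), 2 ^ Fintype.card ι * ((Fintype.card ι)! * ε ^ 2) := by
        refine sum_le_sum fun k _ => (sum_le_sum (hminor k)).trans ?_
        rw [sum_const, card_powersetCard, card_univ, nsmul_eq_mul]
        gcongr
        exact_mod_cast Nat.choose_le_two_pow _ _
    _ = _ := by rw [sum_const, card_range, nsmul_eq_mul]; ring

end Matrix

theorem Finset.one_sub_sum_le_prod_one_sub {ι : Type*} (s : Finset ι) {x : ι → ℝ}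
    (h₀ : ∀ i ∈ s, 0 ≤ x i) (h₁ : ∀ i ∈ s, x i ≤ 1) :
    1 - ∑ i ∈ s, x i ≤ ∏ i ∈ s, (1 - x i) := by
  induction s using Finset.cons_induction with
  | empty => simp
  | cons a s _ ih =>
    rw [sum_cons, prod_cons]
    have hxa₀ := h₀ a (mem_cons_self a s)
    have hxa₁ := h₁ a (mem_cons_self a s)
    have hS := sum_nonneg fun i hi => h₀ i (mem_cons_of_mem hi)
    have ih := ih (fun i hi => h₀ i (mem_cons_of_mem hi)) fun i hi => h₁ i (mem_cons_of_mem hi)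
    nlinarith

theorem Finset.prod_mem_Icc_of_abs_sub_one_le {ι : Type*} (s : Finset ι) {d x : ι → ℝ}
    (hd : ∀ i ∈ s, |d i - 1| ≤ x i) (hx : ∑ i ∈ s, x i < 1) :
    ∏ i ∈ s, d i ∈ Set.Icc (1 - ∑ i ∈ s, x i) (1 - ∑ i ∈ s, x i)⁻¹ := by
  have hx₀ : ∀ i ∈ s, 0 ≤ x i := fun i hi => (abs_nonneg _).trans (hd i hi)
  have hx₁ : ∀ i ∈ s, x i ≤ 1 := fun i hi => (single_le_sum hx₀ hi).trans hx.le
  have hweierstrass := s.one_sub_sum_le_prod_one_sub hx₀ hx₁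
  have hpos : 0 < ∏ i ∈ s, (1 - x i) := by linarith
  have hlower : ∏ i ∈ s, (1 - x i) ≤ ∏ i ∈ s, d i :=
    prod_le_prod (fun i hi => by linarith [hx₁ i hi])
      fun i hi => by linarith [(abs_le.mp (hd i hi)).1]
  have hupper : ∏ i ∈ s, d i ≤ ∏ i ∈ s, (1 + x i) :=
    prod_le_prod (fun i hi => by linarith [(abs_le.mp (hd i hi)).1, hx₁ i hi])
      fun i hi => by linarith [(abs_le.mp (hd i hi)).2]
  have hconj : (∏ i ∈ s, (1 + x i)) * ∏ i ∈ s, (1 - x i) ≤ 1 := by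
    rw [← prod_mul_distrib]
    exact prod_le_one (fun i hi => by nlinarith [hx₀ i hi, hx₁ i hi])
      fun i hi => by nlinarith [hx₀ i hi]
  refine ⟨hweierstrass.trans hlower, ?_⟩
  calc _ ≤ ∏ i ∈ s, (1 + x i) := hupper
    _ ≤ (∏ i ∈ s, (1 - x i))⁻¹ := by rwa [← one_div, le_div_iff₀ hpos]
    _ ≤ (1 - ∑ i ∈ s, x i)⁻¹ := inv_anti₀ (by linarith) hweierstrass

theorem abs_le_frobNorm {n : ℕ} (A : Matrix (Fin n) (Fin n) ℝ) (i j : Fin n) :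
    |A i j| ≤ frobNorm A :=
  Real.abs_le_sqrt <|
    (single_le_sum (f := fun j => A i j ^ 2) (fun _ _ => sq_nonneg _) (mem_univ j)).trans <|
      single_le_sum (f := fun i => ∑ j, A i j ^ 2) (fun _ _ => sum_nonneg fun _ _ => sq_nonneg _)
        (mem_univ i)

theorem frobNorm_nonneg {n : ℕ} (A : Matrix (Fin n) (Fin n) ℝ) : 0 ≤ frobNorm A :=
  Real.sqrt_nonneg _

theorem frobNorm_smul {n : ℕ} (t : ℝ) (A : Matrix (Fin n) (Fin n) ℝ) :
    frobNorm (t • A) = |t| * frobNorm A := by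
  simp only [frobNorm, Matrix.smul_apply, smul_eq_mul, mul_pow, ← mul_sum]
  rw [Real.sqrt_mul (sq_nonneg t), Real.sqrt_sq_eq_abs]

theorem abs_det_one_add_sub_one_le_of_trace_eq_zero {n : ℕ} {B : Matrix (Fin n) (Fin n) ℝ}
    (htr : B.trace = 0) (hB : frobNorm B ≤ 1) :
    |(1 + B).det - 1| ≤ n * 2 ^ n * n ! * frobNorm B ^ 2 := by
  simpa [htr] using
    Matrix.abs_det_one_add_sub_one_sub_trace_le (frobNorm_nonneg B) hB (abs_le_frobNorm B)

theorem det_product_bound_general (n : ℕ) (K : ℝ) (hK : 0 ≤ K) :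
    ∃ τ₀ : ℝ, 0 < τ₀ ∧
      ∀ τ : ℝ, 0 < τ → τ ≤ τ₀ → ∀ N : ℕ, ∀ A : Fin N → Matrix (Fin n) (Fin n) ℝ,
        (∀ k, (A k).trace = 0) →
        (∑ k, τ * frobNorm (A k) ^ 2) ≤ K →
        1 / 2 ≤ (∏ k, (1 + τ • A k).det) ∧ (∏ k, (1 + τ • A k).det) ≤ 2 := by
  set C : ℝ := (n * 2 ^ n * n ! : ℝ)
  have hC : 0 ≤ C := by positivity
  refine ⟨1 / (2 * (C + 1) * (K + 1)), by positivity, fun τ hτ hτ₀ N A htr hsum => ?_⟩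
  have hτK : τ * K * (C + 1) ≤ 1 / 2 := by
    rw [le_div_iff₀ (by positivity)] at hτ₀
    nlinarith
  set ε : Fin N → ℝ := fun k => frobNorm (τ • A k)
  have hε : ∑ k, ε k ^ 2 ≤ τ * K := by
    have hsq : ∀ k, ε k ^ 2 = τ * (τ * frobNorm (A k) ^ 2) := fun k => by
      simp only [ε, frobNorm_smul, abs_of_pos hτ]; ring
    rw [sum_congr rfl fun k _ => hsq k, ← mul_sum]
    exact mul_le_mul_of_nonneg_left hsum hτ.le
  have hε₁ : ∀ k, ε k ≤ 1 := fun k => by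
    have := (single_le_sum (fun j _ => sq_nonneg (ε j)) (mem_univ k)).trans hε
    exact (pow_le_one_iff_of_nonneg (frobNorm_nonneg _) two_ne_zero).mp (by nlinarith)
  have hdet : ∀ k ∈ univ, |(1 + τ • A k).det - 1| ≤ C * ε k ^ 2 := fun k _ =>
    abs_det_one_add_sub_one_le_of_trace_eq_zero
      (by rw [Matrix.trace_smul, htr k, smul_zero]) (hε₁ k)
  have hx : ∑ k, C * ε k ^ 2 ≤ 1 / 2 := by
    rw [← mul_sum]
    nlinarith
  obtain ⟨hlo, hhi⟩ := univ.prod_mem_Icc_of_abs_sub_one_le hdet (by linarith)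
  exact ⟨by linarith, hhi.trans (inv_le_of_inv_le₀ two_pos (by linarith))⟩

/-- **Almost volume preservation of the discrete flow map** (paper, Section 4.1):
for traceless matrices `A_k` with `∑ τ ‖A_k‖² ≤ K` and `τ ≤ τ₀(n, K)`, the product of
the determinants `det(1 + τ A_k)` lies in `[1/2, 2]`. -/
theorem det_product_bound (n : ℕ) (hn : 1 ≤ n) (K : ℝ) (hK : 0 ≤ K) :
    ∃ τ₀ : ℝ, 0 < τ₀ ∧
      ∀ τ : ℝ, 0 < τ → τ ≤ τ₀ → ∀ N : ℕ, ∀ A : Fin N → Matrix (Fin n) (Fin n) ℝ,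
        (∀ k, (A k).trace = 0) →
        (∑ k, τ * frobNorm (A k) ^ 2) ≤ K →
        1 / 2 ≤ (∏ k, (1 + τ • A k).det) ∧ (∏ k, (1 + τ • A k).det) ≤ 2 :=
  det_product_bound_general n K hK
end

section
/- For every n ≥ 1 there is a constant c_n > 0, depending only on n, with the following property: let Q ⊆ ℝⁿ be open and bounded, let ε₀ > 0 and M ≥ 0, let η : Q → ℝⁿ be an injective continuously differentiable map with det Dη(x) ≥ ε₀ and ‖Dη(x)‖ ≤ M for all x ∈ Q, and let u : η(Q) → ℝⁿ be continuously differentiable. Then, with b := u ∘ η, one has ∫_{η(Q)} ‖Du(y)‖² dy ≤ c_n·(M^{2n−2}/ε₀)·∫_Q ‖Db(x)‖² dx. -/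
/-!
Write `Db(x) = Du(η x) ∘ Dη(x)`. Multiplying by the adjugate of `Dη(x)`, whose entries are
`(n - 1)`-minors of `Dη(x)` and hence at most `(n - 1)! M^{n-1}`, gives
`det Dη(x) ‖Du(η x)‖ ≤ n! M^{n-1} ‖Db(x)‖`. Squaring and using `det Dη ≥ ε₀` once,
`det Dη(x) ‖Du(η x)‖² ≤ (n!)² M^{2n-2} / ε₀ · ‖Db(x)‖²`, and the change of variables `y = η x`,
`dy = det Dη(x) dx`, integrates this to the estimate with `c_n = (n!)²`.
-/

open MeasureTheory

/-- The Frobenius norm of a continuous linear map between Euclidean spaces,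
viewed as a matrix in the standard bases. -/
noncomputable def clmFrob {n m : ℕ}
    (f : EuclideanSpace ℝ (Fin n) →L[ℝ] EuclideanSpace ℝ (Fin m)) : ℝ :=
  Real.sqrt (∑ j, ‖f (EuclideanSpace.single j 1)‖ ^ 2)

open Nat Set

attribute [local instance] Matrix.frobeniusNormedAddCommGroup Matrix.frobeniusNormSMulClass

namespace Matrix

variable {l m : Type*} [Fintype l] [Fintype m]

theorem frobenius_norm_sq (A : Matrix l m ℝ) : ‖A‖ ^ 2 = ∑ i, ∑ j, A i j ^ 2 := by
  rw [frobenius_norm_def, ← Real.sqrt_eq_rpow, Real.sq_sqrt (by positivity)]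
  simp

theorem abs_apply_le_frobenius_norm (A : Matrix l m ℝ) (i : l) (j : m) : |A i j| ≤ ‖A‖ := by
  refine abs_le_of_sq_le_sq ?_ (norm_nonneg A)
  rw [frobenius_norm_sq]
  exact (Finset.single_le_sum (fun j _ => sq_nonneg (A i j)) (Finset.mem_univ j)).trans
    (Finset.single_le_sum (fun i _ => Finset.sum_nonneg fun j _ => sq_nonneg (A i j))
      (Finset.mem_univ i))

theorem frobenius_norm_le_of_forall_abs_le (A : Matrix l m ℝ) {c : ℝ} (hc : 0 ≤ c)
    (hA : ∀ i j, |A i j| ≤ c) :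
    ‖A‖ ≤ √(Fintype.card l * Fintype.card m) * c := by
  refine le_of_sq_le_sq ?_ (by positivity)
  calc ‖A‖ ^ 2 = ∑ i, ∑ j, A i j ^ 2 := frobenius_norm_sq A
    _ ≤ ∑ _i : l, ∑ _j : m, c ^ 2 :=
      Finset.sum_le_sum fun i _ => Finset.sum_le_sum fun j _ =>
        sq_le_sq' (abs_le.mp (hA i j)).1 (abs_le.mp (hA i j)).2
    _ = (√(Fintype.card l * Fintype.card m) * c) ^ 2 := by
      rw [mul_pow, Real.sq_sqrt (by positivity)]
      simp [mul_assoc]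

theorem frobenius_norm_adjugate_le {k : ℕ} (A : Matrix (Fin (k + 1)) (Fin (k + 1)) ℝ) :
    ‖adjugate A‖ ≤ (k + 1)! * ‖A‖ ^ k := by
  have hminor : ∀ i j, |adjugate A i j| ≤ k ! * ‖A‖ ^ k := fun i j => by
    rw [adjugate_fin_succ_eq_det_submatrix, abs_mul, abs_pow, abs_neg, abs_one, one_pow, one_mul]
    refine (det_le (abv := AbsoluteValue.abs) fun a b =>
      abs_apply_le_frobenius_norm A (j.succAbove a) (i.succAbove b)).trans_eq ?_
    simp
  refine (frobenius_norm_le_of_forall_abs_le _ (by positivity) hminor).trans_eq ?_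
  rw [Fintype.card_fin, Real.sqrt_mul_self (by positivity), Nat.factorial_succ]
  push_cast
  ring

/-- The matrix form of `H = (H F) F⁻¹ = (H F) adj F / det F`, without dividing. -/
theorem abs_det_mul_frobenius_norm_le {n : Type*} [Fintype n] [DecidableEq n]
    (H : Matrix l n ℝ) (F : Matrix n n ℝ) :
    |F.det| * ‖H‖ ≤ ‖H * F‖ * ‖adjugate F‖ := by
  have : F.det • H = H * F * adjugate F := by
    rw [Matrix.mul_assoc, mul_adjugate, Matrix.mul_smul, Matrix.mul_one]
  rw [← Real.norm_eq_abs, ← norm_smul, this]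
  exact frobenius_norm_mul _ _

end Matrix

section clmFrob

variable {n m : ℕ}

noncomputable abbrev clmMatrix (f : EuclideanSpace ℝ (Fin n) →L[ℝ] EuclideanSpace ℝ (Fin m)) :
    Matrix (Fin m) (Fin n) ℝ :=
  LinearMap.toMatrix (EuclideanSpace.basisFun (Fin n) ℝ).toBasis
    (EuclideanSpace.basisFun (Fin m) ℝ).toBasis f

theorem clmMatrix_apply (f : EuclideanSpace ℝ (Fin n) →L[ℝ] EuclideanSpace ℝ (Fin m))
    (i : Fin m) (j : Fin n) : clmMatrix f i j = f (EuclideanSpace.single j 1) i := by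
  simp [LinearMap.toMatrix_apply]

theorem clmMatrix_comp {k : ℕ} (f : EuclideanSpace ℝ (Fin m) →L[ℝ] EuclideanSpace ℝ (Fin k))
    (g : EuclideanSpace ℝ (Fin n) →L[ℝ] EuclideanSpace ℝ (Fin m)) :
    clmMatrix (f.comp g) = clmMatrix f * clmMatrix g :=
  LinearMap.toMatrix_comp _ _ _ _ _

theorem det_clmMatrix (f : EuclideanSpace ℝ (Fin n) →L[ℝ] EuclideanSpace ℝ (Fin n)) :
    (clmMatrix f).det = f.det :=
  LinearMap.det_toMatrix _ _

theorem clmFrob_eq_norm_clmMatrix (f : EuclideanSpace ℝ (Fin n) →L[ℝ] EuclideanSpace ℝ (Fin m)) :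
    clmFrob f = ‖clmMatrix f‖ := by
  rw [← Real.sqrt_sq (norm_nonneg (clmMatrix f)), Matrix.frobenius_norm_sq, Finset.sum_comm,
    clmFrob]
  simp only [clmMatrix_apply, EuclideanSpace.norm_sq_eq, Real.norm_eq_abs, sq_abs]

theorem clmFrob_nonneg (f : EuclideanSpace ℝ (Fin n) →L[ℝ] EuclideanSpace ℝ (Fin m)) :
    0 ≤ clmFrob f :=
  Real.sqrt_nonneg _

theorem clmFrob_comp_le {k : ℕ} (f : EuclideanSpace ℝ (Fin m) →L[ℝ] EuclideanSpace ℝ (Fin k))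
    (g : EuclideanSpace ℝ (Fin n) →L[ℝ] EuclideanSpace ℝ (Fin m)) :
    clmFrob (f.comp g) ≤ clmFrob f * clmFrob g := by
  simpa only [clmFrob_eq_norm_clmMatrix, clmMatrix_comp] using Matrix.frobenius_norm_mul _ _

theorem continuous_clmFrob :
    Continuous (clmFrob : (EuclideanSpace ℝ (Fin n) →L[ℝ] EuclideanSpace ℝ (Fin m)) → ℝ) :=
  Real.continuous_sqrt.comp <| continuous_finsetSum _ fun j _ =>
    ((ContinuousLinearMap.apply ℝ _ (EuclideanSpace.single j 1)).continuous.norm.pow 2)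

theorem abs_det_mul_clmFrob_le {k : ℕ}
    (H : EuclideanSpace ℝ (Fin (k + 1)) →L[ℝ] EuclideanSpace ℝ (Fin m))
    (F : EuclideanSpace ℝ (Fin (k + 1)) →L[ℝ] EuclideanSpace ℝ (Fin (k + 1))) :
    |F.det| * clmFrob H ≤ (k + 1)! * clmFrob F ^ k * clmFrob (H.comp F) := by
  simp only [clmFrob_eq_norm_clmMatrix, clmMatrix_comp, ← det_clmMatrix]
  calc _ ≤ ‖clmMatrix H * clmMatrix F‖ * ‖(clmMatrix F).adjugate‖ :=
        Matrix.abs_det_mul_frobenius_norm_le _ _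
    _ ≤ ‖clmMatrix H * clmMatrix F‖ * ((k + 1)! * ‖clmMatrix F‖ ^ k) := by
        gcongr
        exact Matrix.frobenius_norm_adjugate_le _
    _ = _ := by ring

theorem abs_det_mul_sq_clmFrob_le {k : ℕ}
    (H : EuclideanSpace ℝ (Fin (k + 1)) →L[ℝ] EuclideanSpace ℝ (Fin m))
    (F : EuclideanSpace ℝ (Fin (k + 1)) →L[ℝ] EuclideanSpace ℝ (Fin (k + 1)))
    {ε₀ M : ℝ} (hε₀ : 0 < ε₀) (hdet : ε₀ ≤ |F.det|) (hF : clmFrob F ≤ M) :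
    |F.det| * clmFrob H ^ 2 ≤ (k + 1)! ^ 2 * (M ^ (2 * k) / ε₀) * clmFrob (H.comp F) ^ 2 := by
  set D := |F.det|
  have hD : D * clmFrob H ≤ (k + 1)! * M ^ k * clmFrob (H.comp F) :=
    (abs_det_mul_clmFrob_le H F).trans <| by
      have := clmFrob_nonneg F
      have := clmFrob_nonneg (H.comp F)
      gcongr
  rw [show (k + 1)! ^ 2 * (M ^ (2 * k) / ε₀) * clmFrob (H.comp F) ^ 2
      = ((k + 1)! * M ^ k * clmFrob (H.comp F)) ^ 2 / ε₀ by ring, le_div_iff₀ hε₀]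
  calc D * clmFrob H ^ 2 * ε₀ ≤ D * clmFrob H ^ 2 * D := by gcongr
    _ = (D * clmFrob H) ^ 2 := by ring
    _ ≤ _ := by gcongr; exact mul_nonneg (abs_nonneg _) (clmFrob_nonneg H)

theorem sq_clmFrob_comp_le
    (H : EuclideanSpace ℝ (Fin n) →L[ℝ] EuclideanSpace ℝ (Fin m))
    (F : EuclideanSpace ℝ (Fin n) →L[ℝ] EuclideanSpace ℝ (Fin n))
    {ε₀ M : ℝ} (hε₀ : 0 < ε₀) (hdet : ε₀ ≤ |F.det|) (hF : clmFrob F ≤ M) :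
    clmFrob (H.comp F) ^ 2 ≤ M ^ 2 / ε₀ * (|F.det| * clmFrob H ^ 2) :=
  calc clmFrob (H.comp F) ^ 2 ≤ (clmFrob H * M) ^ 2 := by
        gcongr
        · exact clmFrob_nonneg _
        · exact (clmFrob_comp_le H F).trans (by gcongr; exact clmFrob_nonneg H)
    _ = M ^ 2 / ε₀ * (ε₀ * clmFrob H ^ 2) := by field_simp
    _ ≤ M ^ 2 / ε₀ * (|F.det| * clmFrob H ^ 2) := by gcongr

end clmFrob

theorem IsOpen.image_of_contDiffOn_of_det_ne_zero {𝕜 E : Type*} [RCLike 𝕜]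
    [NormedAddCommGroup E] [NormedSpace 𝕜 E] [FiniteDimensional 𝕜 E] {f : E → E} {s : Set E}
    (hs : IsOpen s) (hf : ContDiffOn 𝕜 1 f s) (hdet : ∀ x ∈ s, (fderiv 𝕜 f x).det ≠ 0) :
    IsOpen (f '' s) := by
  have := FiniteDimensional.complete 𝕜 E
  rw [isOpen_iff_mem_nhds]
  rintro _ ⟨x, hx, rfl⟩
  have hstrict := (hf.contDiffAt (hs.mem_nhds hx)).hasStrictFDerivAt one_ne_zero
  rw [← (fderiv 𝕜 f x).coe_toContinuousLinearEquivOfDetNeZero (hdet x hx)] at hstrict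
  rw [← hstrict.map_nhds_eq_of_equiv]
  exact Filter.image_mem_map (hs.mem_nhds hx)

/-- The reverse bound `g ≤ L f` makes `g` integrable whenever `f` is; otherwise `∫ f` is the
junk value `0`. -/
theorem setIntegral_le_const_mul_of_le_mul {α : Type*} [MeasurableSpace α] {μ : Measure α}
    {s : Set α} (hs : MeasurableSet s) {f g : α → ℝ} {K L : ℝ} (hK : 0 ≤ K)
    (hg : AEStronglyMeasurable g (μ.restrict s)) (hg0 : ∀ x ∈ s, 0 ≤ g x)
    (hfg : ∀ x ∈ s, f x ≤ K * g x) (hgf : ∀ x ∈ s, g x ≤ L * f x) :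
    ∫ x in s, f x ∂μ ≤ K * ∫ x in s, g x ∂μ := by
  by_cases hf : IntegrableOn f s μ
  · have hgi : IntegrableOn g s μ := by
      refine (hf.const_mul L).mono' hg ((ae_restrict_iff' hs).mpr (ae_of_all _ fun x hx => ?_))
      rw [Real.norm_of_nonneg (hg0 x hx)]
      exact hgf x hx
    rw [← integral_const_mul]
    exact setIntegral_mono_on hf (hgi.const_mul K) hs hfg
  · rw [integral_undef hf]
    exact mul_nonneg hK (setIntegral_nonneg hs hg0)

/-- **Change-of-variables gradient estimate** at the core of the paper's global Korn
inequality (Lemma in Section 2.1): with `b = u ∘ η`,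
`∫_{η(Q)} ‖Du‖² ≤ c_n (M^{2n-2}/ε₀) ∫_Q ‖Db‖²`. -/
theorem gradient_change_of_variables (n : ℕ) (hn : 1 ≤ n) :
    ∃ c : ℝ, 0 < c ∧
      ∀ Q : Set (EuclideanSpace ℝ (Fin n)), IsOpen Q → Bornology.IsBounded Q →
      ∀ ε₀ M : ℝ, 0 < ε₀ → 0 ≤ M →
      ∀ η : EuclideanSpace ℝ (Fin n) → EuclideanSpace ℝ (Fin n),
        Set.InjOn η Q → ContDiffOn ℝ 1 η Q →
        (∀ x ∈ Q, ε₀ ≤ (fderiv ℝ η x).det) →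
        (∀ x ∈ Q, clmFrob (fderiv ℝ η x) ≤ M) →
      ∀ u : EuclideanSpace ℝ (Fin n) → EuclideanSpace ℝ (Fin n),
        ContDiffOn ℝ 1 u (η '' Q) →
        (∫ y in η '' Q, clmFrob (fderiv ℝ u y) ^ 2) ≤
          c * (M ^ (2 * n - 2) / ε₀) * ∫ x in Q, clmFrob (fderiv ℝ (u ∘ η) x) ^ 2 := by
  obtain ⟨k, rfl⟩ : ∃ k, n = k + 1 := ⟨n - 1, by omega⟩
  refine ⟨((k + 1)! : ℝ) ^ 2, by positivity, ?_⟩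
  intro Q hQ _ ε₀ M hε₀ _ η hinj hη hdet hηM u hu
  have hdet_abs : ∀ x ∈ Q, ε₀ ≤ |(fderiv ℝ η x).det| :=
    fun x hx => (hdet x hx).trans (le_abs_self _)
  have hηd : ∀ x ∈ Q, DifferentiableAt ℝ η x :=
    fun x hx => (hη.contDiffAt (hQ.mem_nhds hx)).differentiableAt one_ne_zero
  have hηQ : IsOpen (η '' Q) :=
    hQ.image_of_contDiffOn_of_det_ne_zero hη fun x hx => (hε₀.trans_le (hdet x hx)).ne'
  have hud : ∀ x ∈ Q, DifferentiableAt ℝ u (η x) := fun x hx =>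
    (hu.contDiffAt (hηQ.mem_nhds (mem_image_of_mem η hx))).differentiableAt one_ne_zero
  have hchain : ∀ x ∈ Q, fderiv ℝ (u ∘ η) x = (fderiv ℝ u (η x)).comp (fderiv ℝ η x) :=
    fun x hx => fderiv_comp x (hud x hx) (hηd x hx)
  have hcont : ContinuousOn (fun x => clmFrob (fderiv ℝ (u ∘ η) x) ^ 2) Q :=
    (continuous_clmFrob.comp_continuousOn
      ((hu.comp hη (mapsTo_image η Q)).continuousOn_fderiv_of_isOpen hQ le_rfl)).pow 2
  rw [integral_image_eq_integral_abs_det_fderiv_smul volume hQ.measurableSet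
    (fun x hx => (hηd x hx).hasFDerivAt.hasFDerivWithinAt) hinj]
  refine setIntegral_le_const_mul_of_le_mul hQ.measurableSet (L := M ^ 2 / ε₀) (by positivity)
    (hcont.aestronglyMeasurable hQ.measurableSet) (fun _ _ => sq_nonneg _)
    (fun x hx => ?_) (fun x hx => ?_)
  · rw [smul_eq_mul, hchain x hx, show 2 * (k + 1) - 2 = 2 * k by omega]
    exact abs_det_mul_sq_clmFrob_le _ _ hε₀ (hdet_abs x hx) (hηM x hx)
  · rw [smul_eq_mul, hchain x hx]
    exact sq_clmFrob_comp_le _ _ hε₀ (hdet_abs x hx) (hηM x hx)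
end

section
/- Let n, m ≥ 1, let Ω ⊆ ℝⁿ be open, let u : Ω → ℝ^m be continuously differentiable with ∫_Ω ‖Du(y)‖² dy < ∞, let Q ⊆ ℝⁿ be measurable, ε₀ > 0, and let η₁, η₂ : Q → Ω be maps such that for every s ∈ [0,1] the convex interpolation π_s := s·η₁ + (1−s)·η₂ maps Q injectively into Ω, is differentiable, and satisfies det Dπ_s(x) ≥ ε₀ for all x ∈ Q. Then ∫_Q |u(η₁(x)) − u(η₂(x))|² dx ≤ (1/ε₀)·( ∫_Ω ‖Du(y)‖² dy )·( sup_{x∈Q} |η₁(x) − η₂(x)| )². -/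
/-!
Along the segment `s ↦ π_s x = s • η₁ x + (1 - s) • η₂ x`, the fundamental theorem of calculus
and Jensen's inequality give
`|u (η₁ x) - u (η₂ x)|² ≤ |η₁ x - η₂ x|² ∫₀¹ ‖Du (π_s x)‖² ds`.
Integrating over `Q` and exchanging the order of integration, it remains to bound
`∫_Q ‖Du (π_s x)‖² dx` for each fixed `s`: the change of variables `y = π_s x`, whose Jacobian is
at least `ε₀`, bounds it by `ε₀⁻¹ ∫_Ω ‖Du‖²`. Finally the operator norm of `Du` is dominated by
its Frobenius norm.
-/

open MeasureTheory

open Set Function ENNReal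

section Frobenius

variable {n m : ℕ}

theorem norm_apply_le_clmFrob_mul (f : EuclideanSpace ℝ (Fin n) →L[ℝ] EuclideanSpace ℝ (Fin m))
    (v : EuclideanSpace ℝ (Fin n)) : ‖f v‖ ≤ clmFrob f * ‖v‖ := by
  have hv : ∑ j, v j • EuclideanSpace.single j (1 : ℝ) = v := by
    simpa using (EuclideanSpace.basisFun (Fin n) ℝ).sum_repr v
  calc ‖f v‖ = ‖∑ j, v j • f (EuclideanSpace.single j 1)‖ := by
        conv_lhs => rw [← hv]
        simp only [map_sum, map_smul]
    _ ≤ ∑ j, |v j| * ‖f (EuclideanSpace.single j 1)‖ :=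
        (norm_sum_le _ _).trans_eq (by simp [norm_smul])
    _ ≤ √(∑ j, |v j| ^ 2) * clmFrob f := Real.sum_mul_le_sqrt_mul_sqrt _ _ _
    _ = clmFrob f * ‖v‖ := by simp [EuclideanSpace.norm_eq, mul_comm]

theorem opNorm_le_clmFrob (f : EuclideanSpace ℝ (Fin n) →L[ℝ] EuclideanSpace ℝ (Fin m)) :
    ‖f‖ ≤ clmFrob f :=
  f.opNorm_le_bound (Real.sqrt_nonneg _) (norm_apply_le_clmFrob_mul f)

end Frobenius

instance isProbabilityMeasure_restrict_Icc_zero_one :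
    IsProbabilityMeasure (volume.restrict (Icc (0 : ℝ) 1)) :=
  ⟨by simp⟩

theorem sq_integral_le_integral_sq {α : Type*} [MeasurableSpace α] {μ : Measure α}
    [IsProbabilityMeasure μ] {f : α → ℝ} (hf : Integrable f μ)
    (hf2 : Integrable (fun x => f x ^ 2) μ) :
    (∫ x, f x ∂μ) ^ 2 ≤ ∫ x, f x ^ 2 ∂μ :=
  (even_two.convexOn_pow).map_integral_le (continuous_pow 2).continuousOn isClosed_univ
    (.of_forall fun _ => mem_univ _) hf hf2

section Segment

variable {E F : Type*} [NormedAddCommGroup E] [NormedSpace ℝ E] [NormedAddCommGroup F]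
  [NormedSpace ℝ F] [CompleteSpace F] {Ω : Set E} {u : E → F} {a b : E}

theorem norm_sub_le_integral_norm_fderiv_mul (hΩ : IsOpen Ω) (hu : ContDiffOn ℝ 1 u Ω)
    (hseg : ∀ s ∈ Icc (0 : ℝ) 1, s • b + (1 - s) • a ∈ Ω) :
    ‖u b - u a‖ ≤ (∫ s in Icc (0 : ℝ) 1, ‖fderiv ℝ u (s • b + (1 - s) • a)‖) * ‖b - a‖ := by
  set γ : ℝ → E := fun s => s • b + (1 - s) • a
  have hDu : ContinuousOn (fun s => fderiv ℝ u (γ s)) (Icc 0 1) :=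
    (hu.continuousOn_fderiv_of_isOpen hΩ le_rfl).comp (by fun_prop) hseg
  have hderiv : ∀ s ∈ Icc (0 : ℝ) 1, HasDerivAt (u ∘ γ) (fderiv ℝ u (γ s) (b - a)) s := by
    intro s hs
    have hγ : HasDerivAt γ (b - a) s := by
      have hγ_eq : γ = fun s => a + s • (b - a) := by ext s; simp only [γ]; module
      simpa [hγ_eq] using ((hasDerivAt_id s).smul_const (b - a)).const_add a
    exact ((hu.contDiffAt (hΩ.mem_nhds (hseg s hs))).differentiableAt one_ne_zero
      |>.hasFDerivAt.comp_hasDerivAt s hγ)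
  have hftc : ∫ s in (0 : ℝ)..1, fderiv ℝ u (γ s) (b - a) = u b - u a := by
    rw [intervalIntegral.integral_eq_sub_of_hasDerivAt (fun s hs => hderiv s (by simpa using hs))]
    · simp [γ]
    · exact (hDu.clm_apply continuousOn_const).intervalIntegrable_of_Icc zero_le_one
  rw [← hftc, intervalIntegral.integral_of_le zero_le_one, ← integral_Icc_eq_integral_Ioc,
    ← integral_mul_const]
  refine norm_integral_le_of_norm_le ((hDu.norm.mul continuousOn_const).integrableOn_Icc)
    (.of_forall fun s => (fderiv ℝ u (γ s)).le_opNorm _)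

theorem enorm_sub_sq_le_lintegral_mul (hΩ : IsOpen Ω) (hu : ContDiffOn ℝ 1 u Ω)
    (hseg : ∀ s ∈ Icc (0 : ℝ) 1, s • b + (1 - s) • a ∈ Ω) :
    ‖u b - u a‖ₑ ^ 2 ≤
      (∫⁻ s in Icc (0 : ℝ) 1, ‖fderiv ℝ u (s • b + (1 - s) • a)‖ₑ ^ 2) * ‖b - a‖ₑ ^ 2 := by
  set φ : ℝ → ℝ := fun s => ‖fderiv ℝ u (s • b + (1 - s) • a)‖
  have hφ : ContinuousOn φ (Icc 0 1) :=
    ((hu.continuousOn_fderiv_of_isOpen hΩ le_rfl).comp (by fun_prop) hseg).norm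
  have hφ2 : IntegrableOn (fun s => φ s ^ 2) (Icc 0 1) := (hφ.pow 2).integrableOn_Icc
  have hreal : ‖u b - u a‖ ^ 2 ≤ (∫ s in Icc (0 : ℝ) 1, φ s ^ 2) * ‖b - a‖ ^ 2 :=
    calc ‖u b - u a‖ ^ 2 ≤ ((∫ s in Icc (0 : ℝ) 1, φ s) * ‖b - a‖) ^ 2 := by
          gcongr; exact norm_sub_le_integral_norm_fderiv_mul hΩ hu hseg
      _ = (∫ s in Icc (0 : ℝ) 1, φ s) ^ 2 * ‖b - a‖ ^ 2 := mul_pow _ _ _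
      _ ≤ (∫ s in Icc (0 : ℝ) 1, φ s ^ 2) * ‖b - a‖ ^ 2 := by
          gcongr
          exact sq_integral_le_integral_sq hφ.integrableOn_Icc hφ2
  have hlint : ∫⁻ s in Icc (0 : ℝ) 1, ‖fderiv ℝ u (s • b + (1 - s) • a)‖ₑ ^ 2 =
      ENNReal.ofReal (∫ s in Icc (0 : ℝ) 1, φ s ^ 2) := by
    rw [ofReal_integral_eq_lintegral_ofReal hφ2 (.of_forall fun _ => sq_nonneg _)]
    simp only [φ, ← ofReal_norm, ofReal_pow (norm_nonneg _)]
  rw [hlint, ← ofReal_norm, ← ofReal_norm, ← ofReal_pow (norm_nonneg _),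
    ← ofReal_pow (norm_nonneg _), ← ofReal_mul (integral_nonneg fun _ => by positivity)]
  exact ofReal_le_ofReal hreal

end Segment

theorem lintegral_mul_le_of_forall_le_lintegral {α β : Type*} [MeasurableSpace α]
    [MeasurableSpace β] {μ : Measure α} {ν : Measure β} [SFinite μ] [IsProbabilityMeasure ν]
    {F : α → ℝ≥0∞} {G : α → β → ℝ≥0∞} {c C L : ℝ≥0∞}
    (hG : AEMeasurable (uncurry G) (μ.prod ν))
    (hF : ∀ᵐ x ∂μ, F x ≤ (∫⁻ s, G x s ∂ν) * C)
    (hslice : ∀ᵐ s ∂ν, c * ∫⁻ x, G x s ∂μ ≤ L) :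
    c * ∫⁻ x, F x ∂μ ≤ L * C := by
  calc c * ∫⁻ x, F x ∂μ
      ≤ c * ∫⁻ x, (∫⁻ s, G x s ∂ν) * C ∂μ := by gcongr c * ?_; exact lintegral_mono_ae hF
    _ = (c * ∫⁻ s, ∫⁻ x, G x s ∂μ ∂ν) * C := by
        have hGx : AEMeasurable (fun x => ∫⁻ s, G x s ∂ν) μ := hG.lintegral_prod_right'
        rw [lintegral_mul_const'' _ hGx, lintegral_lintegral_swap hG, mul_assoc]
    _ ≤ (∫⁻ s, c * ∫⁻ x, G x s ∂μ ∂ν) * C := by gcongr; exact lintegral_const_mul_le _ _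
    _ ≤ L * C := by
        gcongr
        simpa using lintegral_mono_ae hslice

theorem ContinuousOn.aemeasurable_restrict_prod {α β γ : Type*} [MeasurableSpace α]
    [MeasurableSpace β] [TopologicalSpace α] [TopologicalSpace β] [OpensMeasurableSpace (α × β)]
    [MeasurableSpace γ] [TopologicalSpace γ] [BorelSpace γ]
    {μ : Measure α} {ν : Measure β} [SFinite μ] [SFinite ν] {f : α × β → γ} {s : Set α}
    {t : Set β} (hf : ContinuousOn f (s ×ˢ t)) (hs : MeasurableSet s) (ht : MeasurableSet t) :
    AEMeasurable f ((μ.restrict s).prod (ν.restrict t)) := by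
  rw [Measure.prod_restrict]
  exact hf.aemeasurable (hs.prod ht)

section ChangeOfVariables

variable {E : Type*} [NormedAddCommGroup E] [NormedSpace ℝ E] [FiniteDimensional ℝ E]
  [MeasurableSpace E] [BorelSpace E] (μ : Measure E) [μ.IsAddHaarMeasure]

theorem ofReal_mul_setLIntegral_comp_le {Q Ω : Set E} {π : E → E} {π' : E → E →L[ℝ] E} {c : ℝ}
    (hQ : MeasurableSet Q) (hπ' : ∀ x ∈ Q, HasFDerivWithinAt π (π' x) Q x) (hinj : InjOn π Q)
    (hmaps : MapsTo π Q Ω) (hdet : ∀ x ∈ Q, c ≤ (π' x).det) (f : E → ℝ≥0∞) :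
    ENNReal.ofReal c * ∫⁻ x in Q, f (π x) ∂μ ≤ ∫⁻ y in Ω, f y ∂μ := by
  calc ENNReal.ofReal c * ∫⁻ x in Q, f (π x) ∂μ
      = ∫⁻ x in Q, ENNReal.ofReal c * f (π x) ∂μ := (lintegral_const_mul' _ _ ofReal_ne_top).symm
    _ ≤ ∫⁻ x in Q, ENNReal.ofReal |(π' x).det| * f (π x) ∂μ :=
        setLIntegral_mono' hQ fun x hx => by
          gcongr; exact (hdet x hx).trans (le_abs_self _)
    _ = ∫⁻ y in π '' Q, f y ∂μ :=
        (lintegral_image_eq_lintegral_abs_det_fderiv_mul μ hQ hπ' hinj f).symm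
    _ ≤ ∫⁻ y in Ω, f y ∂μ := lintegral_mono_set hmaps.image_subset

end ChangeOfVariables

theorem ofReal_mul_setLIntegral_enorm_comp_sub_sq_le {E F : Type*} [NormedAddCommGroup E]
    [NormedSpace ℝ E] [FiniteDimensional ℝ E] [MeasurableSpace E] [BorelSpace E]
    [NormedAddCommGroup F] [NormedSpace ℝ F] [CompleteSpace F]
    (μ : Measure E) [μ.IsAddHaarMeasure] {Ω Q : Set E} (hΩ : IsOpen Ω) {u : E → F}
    (hu : ContDiffOn ℝ 1 u Ω) (hQ : MeasurableSet Q) {ε₀ : ℝ} {η₁ η₂ : E → E}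
    (hπ : ∀ s ∈ Icc (0 : ℝ) 1,
      MapsTo (fun x => s • η₁ x + (1 - s) • η₂ x) Q Ω ∧
      InjOn (fun x => s • η₁ x + (1 - s) • η₂ x) Q ∧
      ∀ x ∈ Q, DifferentiableAt ℝ (fun x' => s • η₁ x' + (1 - s) • η₂ x') x ∧
        ε₀ ≤ (fderiv ℝ (fun x' => s • η₁ x' + (1 - s) • η₂ x') x).det)
    {S : ℝ} (hS : ∀ x ∈ Q, ‖η₁ x - η₂ x‖ ≤ S) :
    ENNReal.ofReal ε₀ * ∫⁻ x in Q, ‖u (η₁ x) - u (η₂ x)‖ₑ ^ 2 ∂μ ≤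
      (∫⁻ y in Ω, ‖fderiv ℝ u y‖ₑ ^ 2 ∂μ) * ENNReal.ofReal (S ^ 2) := by
  have hη₁ : ContinuousOn η₁ Q := fun x hx => by
    simpa using ((hπ 1 (by simp)).2.2 x hx).1.continuousAt.continuousWithinAt
  have hη₂ : ContinuousOn η₂ Q := fun x hx => by
    simpa using ((hπ 0 (by simp)).2.2 x hx).1.continuousAt.continuousWithinAt
  have hinterp : ContinuousOn (fun p : E × ℝ => p.2 • η₁ p.1 + (1 - p.2) • η₂ p.1)
      (Q ×ˢ Icc 0 1) :=
    (continuousOn_snd.smul (hη₁.comp continuousOn_fst fun p hp => hp.1)).add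
      ((continuousOn_const.sub continuousOn_snd).smul (hη₂.comp continuousOn_fst fun p hp => hp.1))
  refine lintegral_mul_le_of_forall_le_lintegral (ν := volume.restrict (Icc (0 : ℝ) 1))
    (G := fun x s => ‖fderiv ℝ u (s • η₁ x + (1 - s) • η₂ x)‖ₑ ^ 2) ?_ ?_ ?_
  · refine ContinuousOn.aemeasurable_restrict_prod ?_ hQ measurableSet_Icc
    exact (ENNReal.continuous_pow 2).comp_continuousOn
      ((hu.continuousOn_fderiv_of_isOpen hΩ le_rfl).comp hinterp
        fun p hp => (hπ p.2 hp.2).1 hp.1).enorm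
  · refine (ae_restrict_iff' hQ).2 (.of_forall fun x hx => ?_)
    refine (enorm_sub_sq_le_lintegral_mul hΩ hu fun s hs => (hπ s hs).1 hx).trans ?_
    gcongr
    rw [← ofReal_norm, ← ofReal_pow (norm_nonneg _)]
    exact ofReal_le_ofReal (pow_le_pow_left₀ (norm_nonneg _) (hS x hx) 2)
  · refine (ae_restrict_iff' measurableSet_Icc).2 (.of_forall fun s hs => ?_)
    obtain ⟨hmaps, hinj, hdiff⟩ := hπ s hs
    exact ofReal_mul_setLIntegral_comp_le μ hQ
      (fun x hx => (hdiff x hx).1.hasFDerivAt.hasFDerivWithinAt) hinj hmaps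
      (fun x hx => (hdiff x hx).2) _

theorem integral_le_one_div_mul_of_ofReal_mul_lintegral_le {α : Type*} [MeasurableSpace α]
    {μ : Measure α} {f : α → ℝ} {c R : ℝ} (hc : 0 < c) (hR : 0 ≤ R)
    (h : ENNReal.ofReal c * ∫⁻ x, ‖f x‖ₑ ∂μ ≤ ENNReal.ofReal R) :
    ∫ x, f x ∂μ ≤ 1 / c * R := by
  have hofReal : ENNReal.ofReal (c * ∫ x, f x ∂μ) ≤ ENNReal.ofReal R := by
    rw [ofReal_mul hc.le]
    refine le_trans ?_ h
    gcongr
    exact (Real.ofReal_le_enorm _).trans (enorm_integral_le_lintegral_enorm f)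
  rw [one_div_mul_eq_div, le_div_iff₀' hc]
  exact (ofReal_le_ofReal_iff hR).1 hofReal

theorem composition_continuity_general (n m : ℕ)
    (Ω : Set (EuclideanSpace ℝ (Fin n))) (hΩ : IsOpen Ω)
    (u : EuclideanSpace ℝ (Fin n) → EuclideanSpace ℝ (Fin m))
    (hu : ContDiffOn ℝ 1 u Ω)
    (hint : IntegrableOn (fun y => clmFrob (fderiv ℝ u y) ^ 2) Ω)
    (Q : Set (EuclideanSpace ℝ (Fin n))) (hQ : MeasurableSet Q)
    (ε₀ : ℝ) (hε₀ : 0 < ε₀)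
    (η₁ η₂ : EuclideanSpace ℝ (Fin n) → EuclideanSpace ℝ (Fin n))
    (hπ : ∀ s ∈ Set.Icc (0 : ℝ) 1,
      Set.MapsTo (fun x => s • η₁ x + (1 - s) • η₂ x) Q Ω ∧
      Set.InjOn (fun x => s • η₁ x + (1 - s) • η₂ x) Q ∧
      ∀ x ∈ Q, DifferentiableAt ℝ (fun x' => s • η₁ x' + (1 - s) • η₂ x') x ∧
        ε₀ ≤ (fderiv ℝ (fun x' => s • η₁ x' + (1 - s) • η₂ x') x).det)
    (S : ℝ) (hS : ∀ x ∈ Q, ‖η₁ x - η₂ x‖ ≤ S) :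
    (∫ x in Q, ‖u (η₁ x) - u (η₂ x)‖ ^ 2) ≤
      1 / ε₀ * (∫ y in Ω, clmFrob (fderiv ℝ u y) ^ 2) * S ^ 2 := by
  set I := ∫ y in Ω, clmFrob (fderiv ℝ u y) ^ 2
  have hI : ∫⁻ y in Ω, ‖fderiv ℝ u y‖ₑ ^ 2 ≤ ENNReal.ofReal I := by
    rw [ofReal_integral_eq_lintegral_ofReal hint (.of_forall fun _ => sq_nonneg _)]
    refine setLIntegral_mono' hΩ.measurableSet fun y _ => ?_
    rw [← ofReal_norm, ← ofReal_pow (norm_nonneg _)]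
    gcongr
    exact opNorm_le_clmFrob _
  have hI0 : 0 ≤ I := setIntegral_nonneg hΩ.measurableSet fun _ _ => sq_nonneg _
  rw [mul_assoc]
  refine integral_le_one_div_mul_of_ofReal_mul_lintegral_le hε₀ (by positivity) ?_
  simp only [enorm_pow, enorm_norm]
  calc _ ≤ (∫⁻ y in Ω, ‖fderiv ℝ u y‖ₑ ^ 2) * ENNReal.ofReal (S ^ 2) :=
        ofReal_mul_setLIntegral_enorm_comp_sub_sq_le volume hΩ hu hQ hπ hS
    _ ≤ ENNReal.ofReal I * ENNReal.ofReal (S ^ 2) := by gcongr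
    _ = ENNReal.ofReal (I * S ^ 2) := (ofReal_mul hI0).symm

/-- **Composition-continuity estimate** used to identify the limit of `u⁽τ⁾ ∘ η⁽τ⁾`
(paper, proof of the convergence Proposition in Section 2.2):
`∫_Q |u∘η₁ − u∘η₂|² ≤ (1/ε₀) (∫_Ω ‖Du‖²) (sup_Q |η₁ − η₂|)²`,
where the supremum is expressed through an arbitrary upper bound `S`. -/
theorem composition_continuity (n m : ℕ) (hn : 1 ≤ n) (hm : 1 ≤ m)
    (Ω : Set (EuclideanSpace ℝ (Fin n))) (hΩ : IsOpen Ω)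
    (u : EuclideanSpace ℝ (Fin n) → EuclideanSpace ℝ (Fin m))
    (hu : ContDiffOn ℝ 1 u Ω)
    (hint : IntegrableOn (fun y => clmFrob (fderiv ℝ u y) ^ 2) Ω)
    (Q : Set (EuclideanSpace ℝ (Fin n))) (hQ : MeasurableSet Q)
    (ε₀ : ℝ) (hε₀ : 0 < ε₀)
    (η₁ η₂ : EuclideanSpace ℝ (Fin n) → EuclideanSpace ℝ (Fin n))
    (hπ : ∀ s ∈ Set.Icc (0 : ℝ) 1,
      Set.MapsTo (fun x => s • η₁ x + (1 - s) • η₂ x) Q Ω ∧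
      Set.InjOn (fun x => s • η₁ x + (1 - s) • η₂ x) Q ∧
      ∀ x ∈ Q, DifferentiableAt ℝ (fun x' => s • η₁ x' + (1 - s) • η₂ x') x ∧
        ε₀ ≤ (fderiv ℝ (fun x' => s • η₁ x' + (1 - s) • η₂ x') x).det)
    (S : ℝ) (hS : ∀ x ∈ Q, ‖η₁ x - η₂ x‖ ≤ S) :
    (∫ x in Q, ‖u (η₁ x) - u (η₂ x)‖ ^ 2) ≤
      1 / ε₀ * (∫ y in Ω, clmFrob (fderiv ℝ u y) ^ 2) * S ^ 2 :=
  composition_continuity_general n m Ω hΩ u hu hint Q hQ ε₀ hε₀ η₁ η₂ hπ S hS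
end

section
/- Let h > 0, N ∈ ℕ with N ≥ 1, set T = N·h, let A ≥ 0, and let f : [0,T] → [0,∞) be Lebesgue integrable. Suppose that for every t ∈ [h,T] one has (1/h)·∫_{t−h}^{t} f(s) ds ≤ A + (1/(2T))·∫₀^T f(s) ds. Then ∫₀^T f(s) ds ≤ 2·T·A. -/
open MeasureTheory

/-! Cut `[0, T]` into the `N` windows `[(k-1)h, kh]`. The averaged bound controls the integral
over each window by `h (A + I/(2T))`, where `I = ∫₀^T f`, so summing gives `I ≤ T A + I/2`, and the
term `I/2` is absorbed into the left-hand side. -/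

section BlockDecomposition

variable {f : ℝ → ℝ} {μ : Measure ℝ} {h : ℝ} {N : ℕ}

theorem IntervalIntegrable.mono_block (hf : IntervalIntegrable f μ 0 (N * h)) {k : ℕ}
    (hk : k < N) : IntervalIntegrable f μ (k * h) ((k + 1) * h) := by
  have hblock : Set.uIcc (k : ℝ) (k + 1) ⊆ Set.uIcc 0 (N : ℝ) :=
    Set.uIcc_subset_uIcc
      (Set.mem_uIcc_of_le k.cast_nonneg (by exact_mod_cast hk.le))
      (Set.mem_uIcc_of_le (by positivity) (by exact_mod_cast hk))
  refine hf.mono_set ?_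
  simpa only [Set.image_mul_const_uIcc, zero_mul] using Set.image_mono (f := (· * h)) hblock

theorem intervalIntegral_le_mul_of_forall_block_le (hf : IntervalIntegrable f μ 0 (N * h))
    {C : ℝ} (hblock : ∀ k < N, ∫ s in k * h..(k + 1) * h, f s ∂μ ≤ C) :
    ∫ s in 0..N * h, f s ∂μ ≤ N * C := by
  have hsplit := intervalIntegral.sum_integral_adjacent_intervals (μ := μ) (f := f)
    (a := fun k : ℕ => k * h) (n := N) fun k hk => by
      simpa only [Nat.cast_succ] using hf.mono_block hk
  simp only [Nat.cast_zero, zero_mul, Nat.cast_succ] at hsplit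
  rw [← hsplit]
  simpa only [Finset.sum_const, Finset.card_range, nsmul_eq_mul] using
    Finset.sum_le_sum fun k hk => hblock k (Finset.mem_range.mp hk)

theorem intervalIntegral_le_of_forall_average_le (hh : 0 < h)
    (hf : IntervalIntegrable f μ 0 (N * h)) {M : ℝ}
    (hmean : ∀ t ∈ Set.Icc h (N * h), (1 / h) * ∫ s in (t - h)..t, f s ∂μ ≤ M) :
    ∫ s in 0..N * h, f s ∂μ ≤ N * h * M := by
  rw [mul_assoc]
  refine intervalIntegral_le_mul_of_forall_block_le hf fun k hk => ?_
  have hk' : (k : ℝ) + 1 ≤ N := by exact_mod_cast hk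
  have ht : (k + 1) * h ∈ Set.Icc h (N * h) :=
    ⟨le_mul_of_one_le_left hh.le (by linarith [k.cast_nonneg (α := ℝ)]),
      mul_le_mul_of_nonneg_right hk' hh.le⟩
  have hwindow := hmean _ ht
  rw [add_one_mul, add_sub_cancel_right, one_div_mul_eq_div, div_le_iff₀ hh] at hwindow
  rwa [add_one_mul, mul_comm h]

end BlockDecomposition

theorem le_two_mul_mul_of_le_mul_add {I T A : ℝ} (hT : 0 ≤ T)
    (hI : I ≤ T * (A + 1 / (2 * T) * I)) : I ≤ 2 * T * A := by
  rcases hT.eq_or_lt with rfl | hT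
  · simpa using hI
  · have hhalf : T * (1 / (2 * T) * I) = I / 2 := by field_simp
    rw [mul_add, hhalf] at hI
    linarith

theorem averaged_bound_absorption_general (h : ℝ) (hh : 0 < h) (N : ℕ)
    (T : ℝ) (hT : T = (N : ℝ) * h) (A : ℝ) (f : ℝ → ℝ)
    (hf_int : IntervalIntegrable f volume 0 T)
    (hmean : ∀ t ∈ Set.Icc h T,
      (1 / h) * ∫ s in (t - h)..t, f s ≤ A + (1 / (2 * T)) * ∫ s in (0 : ℝ)..T, f s) :
    (∫ s in (0 : ℝ)..T, f s) ≤ 2 * T * A := by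
  subst hT
  exact le_two_mul_mul_of_le_mul_add (by positivity)
    (intervalIntegral_le_of_forall_average_le hh hf_int hmean)

/-- **Absorption argument** converting the `h`-averaged kinetic-energy bound of the
time-delayed energy inequality into a global a-priori bound (paper, Sections 3.2, 4.2):
if `(1/h)∫_{t−h}^t f ≤ A + (1/(2T))∫₀^T f` for all `t ∈ [h,T]` with `T = Nh`,
then `∫₀^T f ≤ 2TA`. -/
theorem averaged_bound_absorption (h : ℝ) (hh : 0 < h) (N : ℕ) (hN : 1 ≤ N)
    (T : ℝ) (hT : T = (N : ℝ) * h) (A : ℝ) (hA : 0 ≤ A) (f : ℝ → ℝ)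
    (hf_nonneg : ∀ s ∈ Set.Icc (0 : ℝ) T, 0 ≤ f s)
    (hf_int : IntervalIntegrable f volume 0 T)
    (hmean : ∀ t ∈ Set.Icc h T,
      (1 / h) * ∫ s in (t - h)..t, f s ≤ A + (1 / (2 * T)) * ∫ s in (0 : ℝ)..T, f s) :
    (∫ s in (0 : ℝ)..T, f s) ≤ 2 * T * A :=
  averaged_bound_absorption_general h hh N T hT A f hf_int hmean
end
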